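/- arXiv:1703.00539 — 2 statements merged into one kernel-verified Lean document; each statement's English description precedes it below -/
import Mathlib

section
/- Let G = ([N], E) be a chordal graph with a perfect elimination ordering v_1, ..., v_N. For each vertex v_i that has a neighbor of larger index, let i* = min{ j : j > i, {v_i, v_j} ∈ E }. Then the edge set E' = { {v_i, v_{i*}} : v_i has a neighbor of larger index } forms a spanning forest of G with N − κ(G) edges. -/
/-!
Following first-later-neighbour pointers `i ↦ i*` from any vertex strictly climbs the order
and stops exactly at the vertices without a later neighbour. In a perfect elimination ordering,
if `i*` is not already `j` for a later neighbour `j` of `i`, then `i*` and `j` are adjacent, so by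
downward induction every later neighbour of `i` is reached by following pointers from `i`.
Hence each connected component contains exactly one pointer-free vertex, so the pointer edges,
one per remaining vertex, number `N - κ(G)`; they form a forest since on a cycle its smallest
vertex would have two distinct pointer edges.
-/

open Relation

namespace SimpleGraph

variable {V : Type*} [LinearOrder V]

def IsPerfectEliminationOrder (G : SimpleGraph V) : Prop :=
  ∀ i j k : V, i < j → i < k → j ≠ k → G.Adj i j → G.Adj i k → G.Adj j k

def IsFirstLaterNeighbor (G : SimpleGraph V) (i j : V) : Prop :=
  G.Adj i j ∧ i < j ∧ ∀ k, i < k → G.Adj i k → j ≤ k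

def firstLaterNeighborEdges (G : SimpleGraph V) : Set (Sym2 V) :=
  {s | ∃ i j, s = s(i, j) ∧ G.IsFirstLaterNeighbor i j}

theorem isAcyclic_of_forall_lt_adj_eq {H : SimpleGraph V}
    (h : ∀ v a b, v < a → v < b → H.Adj v a → H.Adj v b → a = b) : H.IsAcyclic := by
  intro u c hc
  let m := c.support.toFinset.min' ⟨u, by simp⟩
  have hm : m ∈ c.support := by simpa using c.support.toFinset.min'_mem ⟨u, by simp⟩
  let c' := c.rotate m hm
  have hc' : c'.IsCycle := hc.rotate hm
  have lt_of_mem {x : V} (hx : x ∈ c'.support) (hxm : H.Adj m x) : m < x :=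
    lt_of_le_of_ne (c.support.toFinset.min'_le x (by simpa [c'] using hx)) hxm.ne
  have hsnd := c'.adj_snd hc'.not_nil
  have hpen := (c'.adj_penultimate hc'.not_nil).symm
  exact hc'.snd_ne_penultimate <| h m _ _ (lt_of_mem (c'.getVert_mem_support 1) hsnd)
    (lt_of_mem (c'.getVert_mem_support _) hpen) hsnd hpen

variable {G : SimpleGraph V} {i j k : V}

namespace IsFirstLaterNeighbor

theorem adj (h : G.IsFirstLaterNeighbor i j) : G.Adj i j := h.1

theorem lt (h : G.IsFirstLaterNeighbor i j) : i < j := h.2.1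

theorem unique (hj : G.IsFirstLaterNeighbor i j) (hk : G.IsFirstLaterNeighbor i k) : j = k :=
  le_antisymm (hj.2.2 k hk.lt hk.adj) (hk.2.2 j hj.lt hj.adj)

end IsFirstLaterNeighbor

theorem exists_isFirstLaterNeighbor_le [WellFoundedLT V] (hij : i < j) (h : G.Adj i j) :
    ∃ n, G.IsFirstLaterNeighbor i n ∧ n ≤ j := by
  obtain ⟨n, ⟨hin, hn⟩, hmin⟩ := wellFounded_lt.has_min {k | i < k ∧ G.Adj i k} ⟨j, hij, h⟩
  exact ⟨n, ⟨hn, hin, fun k hik hk => not_lt.1 (hmin k ⟨hik, hk⟩)⟩, not_lt.1 (hmin j ⟨hij, h⟩)⟩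

theorem exists_reflTransGen_isFirstLaterNeighbor_forall_not [WellFoundedGT V] (i : V) :
    ∃ s, ReflTransGen G.IsFirstLaterNeighbor i s ∧ ∀ j, ¬ G.IsFirstLaterNeighbor s j := by
  induction i using WellFoundedGT.induction with
  | _ i ih =>
    by_cases h : ∃ n, G.IsFirstLaterNeighbor i n
    · obtain ⟨n, hn⟩ := h
      obtain ⟨s, hns, hs⟩ := ih n hn.lt
      exact ⟨s, .head hn hns, hs⟩
    · exact ⟨i, .refl, not_exists.1 h⟩

theorem reachable_of_reflTransGen_isFirstLaterNeighbor
    (h : ReflTransGen G.IsFirstLaterNeighbor i j) : G.Reachable i j :=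
  (reachable_iff_reflTransGen i j).2 <|
    ReflTransGen.mono (fun _ _ => IsFirstLaterNeighbor.adj) _ _ h

namespace IsPerfectEliminationOrder

theorem reflTransGen_isFirstLaterNeighbor_of_adj [WellFoundedLT V] [WellFoundedGT V]
    (hG : G.IsPerfectEliminationOrder) (hij : i < j) (h : G.Adj i j) :
    ReflTransGen G.IsFirstLaterNeighbor i j := by
  induction i using WellFoundedGT.induction with
  | _ i ih =>
    obtain ⟨n, hn, hnj⟩ := exists_isFirstLaterNeighbor_le hij h
    rcases hnj.lt_or_eq with hnj | rfl
    · exact .head hn (ih n hn.lt hnj (hG i n j hn.lt hij hnj.ne hn.adj h))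
    · exact .single hn

theorem reflTransGen_isFirstLaterNeighbor_of_reachable [WellFoundedLT V] [WellFoundedGT V]
    (hG : G.IsPerfectEliminationOrder) {a w : V} (hw : ∀ j, ¬ G.IsFirstLaterNeighbor w j)
    (h : G.Reachable a w) : ReflTransGen G.IsFirstLaterNeighbor a w := by
  obtain ⟨p⟩ := h
  induction p with
  | nil => exact .refl
  | @cons a x w hax _ ih =>
    rcases lt_or_gt_of_ne hax.ne with hlt | hgt
    · exact (hG.reflTransGen_isFirstLaterNeighbor_of_adj hlt hax).trans (ih hw)
    · have hxa := hG.reflTransGen_isFirstLaterNeighbor_of_adj hgt hax.symm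
      -- Pointer chains are determined by their start, so the chains from `x` to `a` and to `w` are
      -- nested, and the one to `w` cannot be the shorter since `w` has no pointer.
      rcases ReflTransGen.total_of_right_unique (r := G.IsFirstLaterNeighbor)
        (fun _ _ _ => IsFirstLaterNeighbor.unique) hxa (ih hw) with haw | hwa
      · exact haw
      · rcases hwa.cases_head with rfl | ⟨c, hwc, _⟩
        · exact .refl
        · exact absurd hwc (hw c)

theorem card_connectedComponent [WellFoundedLT V] [WellFoundedGT V]
    (hG : G.IsPerfectEliminationOrder) :
    Nat.card G.ConnectedComponent = {s | ∀ j, ¬ G.IsFirstLaterNeighbor s j}.ncard := by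
  rw [← Nat.card_coe_set_eq]
  refine (Nat.card_eq_of_bijective (fun s => G.connectedComponentMk s.1) ⟨?_, ?_⟩).symm
  · rintro ⟨u, hu⟩ ⟨w, hw⟩ huw
    rcases (hG.reflTransGen_isFirstLaterNeighbor_of_reachable hw
      (ConnectedComponent.exact huw)).cases_head with rfl | ⟨c, huc, _⟩
    · rfl
    · exact absurd huc (hu c)
  · refine ConnectedComponent.ind fun i => ?_
    obtain ⟨s, his, hs⟩ := exists_reflTransGen_isFirstLaterNeighbor_forall_not (G := G) i
    exact ⟨⟨s, hs⟩,
      ConnectedComponent.sound (reachable_of_reflTransGen_isFirstLaterNeighbor his).symm⟩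

end IsPerfectEliminationOrder

theorem ncard_firstLaterNeighborEdges :
    G.firstLaterNeighborEdges.ncard = {i | ∃ j, G.IsFirstLaterNeighbor i j}.ncard := by
  symm
  refine Set.ncard_congr (fun i hi => s(i, hi.choose)) (fun i hi => ⟨i, _, rfl, hi.choose_spec⟩)
    ?_ ?_
  · intro i i' hi hi' h
    rcases Sym2.eq_iff.1 h with ⟨h, -⟩ | ⟨hij', hji'⟩
    · exact h
    · exact absurd ((hi.choose_spec.lt.trans_eq hji').trans
        (hi'.choose_spec.lt.trans_eq hij'.symm)) (lt_irrefl i)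
  · rintro _ ⟨i, j, rfl, hij⟩
    exact ⟨i, ⟨j, hij⟩, by rw [(Exists.choose_spec ⟨j, hij⟩).unique hij]⟩

theorem fromEdgeSet_firstLaterNeighborEdges_adj {a b : V} :
    (fromEdgeSet G.firstLaterNeighborEdges).Adj a b ↔
      G.IsFirstLaterNeighbor a b ∨ G.IsFirstLaterNeighbor b a := by
  simp only [fromEdgeSet_adj, firstLaterNeighborEdges, Set.mem_ofPred_eq, Sym2.eq_iff]
  constructor
  · rintro ⟨⟨i, j, ⟨rfl, rfl⟩ | ⟨rfl, rfl⟩, hij⟩, -⟩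
    exacts [.inl hij, .inr hij]
  · rintro (h | h)
    exacts [⟨⟨a, b, .inl ⟨rfl, rfl⟩, h⟩, h.lt.ne⟩, ⟨⟨b, a, .inr ⟨rfl, rfl⟩, h⟩, h.lt.ne'⟩]

theorem fromEdgeSet_firstLaterNeighborEdges_le : fromEdgeSet G.firstLaterNeighborEdges ≤ G := by
  intro a b h
  rcases fromEdgeSet_firstLaterNeighborEdges_adj.1 h with h | h
  exacts [h.adj, h.adj.symm]

theorem isAcyclic_fromEdgeSet_firstLaterNeighborEdges :
    (fromEdgeSet G.firstLaterNeighborEdges).IsAcyclic := by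
  have isFirstLaterNeighbor_of_lt {v a : V} (hva : v < a)
      (h : (fromEdgeSet G.firstLaterNeighborEdges).Adj v a) : G.IsFirstLaterNeighbor v a :=
    (fromEdgeSet_firstLaterNeighborEdges_adj.1 h).resolve_right fun h' => h'.lt.not_gt hva
  exact isAcyclic_of_forall_lt_adj_eq fun v a b hva hvb ha hb =>
    (isFirstLaterNeighbor_of_lt hva ha).unique (isFirstLaterNeighbor_of_lt hvb hb)

end SimpleGraph

/-- Given a perfect elimination ordering of a chordal graph (here the identity ordering on
`Fin N`), the edges from each vertex to its smallest later neighbor form a spanning forest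
with `N - κ(G)` edges. -/
theorem stmt_2 {N : ℕ} (G : SimpleGraph (Fin N)) [DecidableRel G.Adj]
    (hPEO : ∀ i j k : Fin N, i < j → i < k → j ≠ k → G.Adj i j → G.Adj i k → G.Adj j k) :
    ∀ E' : Set (Sym2 (Fin N)),
      E' = {s | ∃ i j : Fin N, s = s(i, j) ∧ G.Adj i j ∧ i < j ∧
        ∀ k : Fin N, i < k → G.Adj i k → j ≤ k} →
      (SimpleGraph.fromEdgeSet E').IsAcyclic ∧ SimpleGraph.fromEdgeSet E' ≤ G ∧
        E'.ncard = N - Fintype.card G.ConnectedComponent := by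
  rintro E' rfl
  have hG : G.IsPerfectEliminationOrder := hPEO
  refine ⟨SimpleGraph.isAcyclic_fromEdgeSet_firstLaterNeighborEdges,
    SimpleGraph.fromEdgeSet_firstLaterNeighborEdges_le, ?_⟩
  have hcompl := Set.ncard_add_ncard_compl {i | ∃ j, G.IsFirstLaterNeighbor i j}
  simp only [Set.compl_ofPred, not_exists, Nat.card_eq_fintype_card, Fintype.card_fin] at hcompl
  change G.firstLaterNeighborEdges.ncard = _
  rw [SimpleGraph.ncard_firstLaterNeighborEdges, ← Nat.card_eq_fintype_card,
    hG.card_connectedComponent]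
  omega
end

section
/- Let G = ([ℓ], E) be the cycle graph on ℓ ≥ 3 vertices and let K be a real symmetric ℓ×ℓ matrix whose induced graph is G (i.e., K_{i,j} ≠ 0 exactly when {i,j} ∈ E or i = j). Then det(K) = Σ_{M ∈ M(G)} (−1)^{|M|} Π_{{i,j} ∈ M} K_{i,j}² · Π_{i ∉ V(M)} K_{i,i} + 2·(−1)^{ℓ+1}·Π_{{i,j} ∈ E} K_{i,j}, where M(G) is the set of matchings of G and V(M) the set of vertices covered by M. -/
open Finset

/-- The edges of the cycle graph on `Fin ℓ`, as ordered pairs `(i, j)` with `i < j`. -/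
def cycleEdges (ℓ : ℕ) : Finset (Fin ℓ × Fin ℓ) :=
  univ.filter (fun p => p.1 < p.2 ∧
    (((p.1 : ℕ) + 1) % ℓ = (p.2 : ℕ) ∨ ((p.2 : ℕ) + 1) % ℓ = (p.1 : ℕ)))

/-- The matchings of the cycle graph on `Fin ℓ`: sets of pairwise vertex-disjoint edges. -/
def cycleMatchings (ℓ : ℕ) : Finset (Finset (Fin ℓ × Fin ℓ)) :=
  (cycleEdges ℓ).powerset.filter (fun M =>
    ∀ p ∈ M, ∀ q ∈ M, p ≠ q → p.1 ≠ q.1 ∧ p.1 ≠ q.2 ∧ p.2 ≠ q.1 ∧ p.2 ≠ q.2)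

/-- The vertices covered by a matching. -/
def coveredVerts {ℓ : ℕ} (M : Finset (Fin ℓ × Fin ℓ)) : Finset (Fin ℓ) :=
  M.biUnion (fun p => {p.1, p.2})

/-!
Expand `det K = ∑ σ, sign σ • ∏ i, K (σ i) i`. As `K` vanishes off the cycle, only permutations
sending every vertex to itself or to a neighbour contribute. An involution of this kind is a
product of disjoint transpositions along edges, i.e. a matching `M`; it contributes
`(-1)^|M| ∏_{ij ∈ M} K_ij² ∏_{i ∉ V(M)} K_ii`. A non-involution sends some `i` to a neighbour,
say `i + 1`, without sending `i + 1` back to `i`; injectivity then forces `i + 1 ↦ i + 2`, and so on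
around the cycle, so it is one of the two rotations, each contributing `(-1)^(ℓ+1) ∏_{ij ∈ E} K_ij`.
-/

open Equiv Function

theorem Matrix.det_eq_sum_filter_of_apply_ne_zero {ι R : Type*} [Fintype ι] [DecidableEq ι]
    [CommRing R] (A : Matrix ι ι R) {P : ι → ι → Prop} [DecidableRel P]
    (hA : ∀ i j, A i j ≠ 0 → P i j) :
    A.det = ∑ σ ∈ ({σ | ∀ i, P (σ i) i} : Finset (Perm ι)), Perm.sign σ • ∏ i, A (σ i) i := by
  rw [det_apply, sum_filter_of_ne]
  intro σ _ hσ i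
  by_contra h
  exact hσ (by
    rw [prod_eq_zero (f := fun j => A (σ j) j) (mem_univ i) (not_imp_comm.1 (hA _ _) h), smul_zero])

def PairwiseVertexDisjoint {α : Type*} (M : Finset (α × α)) : Prop :=
  ∀ p ∈ M, ∀ q ∈ M, p ≠ q → p.1 ≠ q.1 ∧ p.1 ≠ q.2 ∧ p.2 ≠ q.1 ∧ p.2 ≠ q.2

lemma PairwiseVertexDisjoint.pairwiseDisjoint {α : Type*} [DecidableEq α] {M : Finset (α × α)}
    (hM : PairwiseVertexDisjoint M) :
    (M : Set (α × α)).PairwiseDisjoint fun p => ({p.1, p.2} : Finset α) := by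
  intro p hp q hq hpq
  have := hM p hp q hq hpq
  simp only [Function.onFun, disjoint_insert_left, disjoint_insert_right, disjoint_singleton,
    mem_insert, mem_singleton]
  tauto

namespace Equiv.Perm

instance {α : Type*} [Fintype α] [DecidableEq α] (σ : Perm α) : Decidable (Involutive σ) :=
  inferInstanceAs (Decidable (∀ x, σ (σ x) = x))

lemma involutive_swap_mul {α : Type*} [DecidableEq α] {σ : Perm α} (hσ : Involutive σ)
    {a b : α} (ha : σ a = a) (hb : σ b = b) : Involutive (swap a b * σ) := by
  have hcomm : ∀ x, σ (swap a b x) = swap a b (σ x) := by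
    intro x
    have hinj : ∀ u v, σ u = σ v → u = v := fun _ _ h => σ.injective h
    rw [swap_apply_def, swap_apply_def]
    grind
  intro x
  simp only [mul_apply, hcomm, hσ x, swap_apply_self]

variable {α : Type*} [LinearOrder α] [Fintype α] {σ : Perm α}

/-- For an involution, these are its transpositions `(i i')`, recorded as pairs with `i < i'`. -/
def excedancePairs (σ : Perm α) : Finset (α × α) := {p | p.1 < p.2 ∧ σ p.1 = p.2}

@[simp] lemma mem_excedancePairs {p : α × α} :
    p ∈ σ.excedancePairs ↔ p.1 < p.2 ∧ σ p.1 = p.2 := by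
  simp [excedancePairs]

lemma mk_mem_excedancePairs_or (hσ : Involutive σ) {i : α} (hi : σ i ≠ i) :
    (i, σ i) ∈ σ.excedancePairs ∨ (σ i, i) ∈ σ.excedancePairs := by
  rcases hi.lt_or_gt with h | h
  · exact .inr (mem_excedancePairs.2 ⟨h, hσ i⟩)
  · exact .inl (mem_excedancePairs.2 ⟨h, rfl⟩)

lemma pairwiseVertexDisjoint_excedancePairs (hσ : Involutive σ) :
    PairwiseVertexDisjoint σ.excedancePairs := by
  intro p hp q hq hpq
  simp only [mem_excedancePairs] at hp hq
  have h1 := hσ p.1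
  have h2 := hσ q.1
  refine ⟨?_, ?_, ?_, ?_⟩ <;> intro h <;> apply hpq <;> grind

lemma biUnion_excedancePairs (hσ : Involutive σ) :
    σ.excedancePairs.biUnion (fun p => {p.1, p.2}) = σ.support := by
  ext i
  simp only [mem_biUnion, mem_insert, mem_singleton, mem_support]
  constructor
  · rintro ⟨p, hp, rfl | rfl⟩ <;> rw [mem_excedancePairs] at hp
    · exact hp.2 ▸ hp.1.ne'
    · rw [← hp.2, hσ]; exact hp.2 ▸ hp.1.ne
  · intro hi
    rcases mk_mem_excedancePairs_or hσ hi with h | h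
    · exact ⟨_, h, .inl rfl⟩
    · exact ⟨_, h, .inr rfl⟩

lemma card_support_eq_two_mul (hσ : Involutive σ) : #σ.support = 2 * #σ.excedancePairs := by
  rw [← biUnion_excedancePairs hσ,
    card_biUnion (pairwiseVertexDisjoint_excedancePairs hσ).pairwiseDisjoint,
    sum_const_nat fun p hp => card_pair (mem_excedancePairs.1 hp).1.ne, mul_comm]

lemma sign_eq_neg_one_pow_card_excedancePairs (hσ : Involutive σ) :
    sign σ = (-1) ^ #σ.excedancePairs := by
  have hsq : σ ^ 2 = 1 := Equiv.ext hσ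
  rw [sign_of_pow_two_eq_one hsq, card_fixedPoints, sum_cycleType,
    Nat.sub_sub_self σ.support.card_le_univ, card_support_eq_two_mul hσ,
    Nat.mul_div_cancel_left _ two_pos]

lemma prod_apply_eq_prod_excedancePairs_mul {M : Type*} [CommMonoid M] (hσ : Involutive σ)
    (f : α → α → M) :
    ∏ i, f (σ i) i =
      (∏ p ∈ σ.excedancePairs, f p.1 p.2 * f p.2 p.1) * ∏ i ∈ univ \ σ.support, f i i := by
  rw [← prod_sdiff (subset_univ σ.support), mul_comm, ← biUnion_excedancePairs hσ,
    prod_biUnion (pairwiseVertexDisjoint_excedancePairs hσ).pairwiseDisjoint,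
    biUnion_excedancePairs hσ]
  congr 1
  · refine prod_congr rfl fun p hp => ?_
    rw [mem_excedancePairs] at hp
    rw [prod_pair hp.1.ne, hp.2, ← hp.2, hσ, hp.2, mul_comm]
  · exact prod_congr rfl fun i hi => by rw [notMem_support.1 (mem_sdiff.1 hi).2]

lemma excedancePairs_injOn : Set.InjOn excedancePairs {σ : Perm α | Involutive σ} := by
  intro σ hσ τ hτ h
  have hsupp : σ.support = τ.support := by
    rw [← biUnion_excedancePairs hσ, ← biUnion_excedancePairs hτ, h]
  ext i
  by_cases hi : σ i = i
  · rw [hi, notMem_support.1 (hsupp ▸ notMem_support.2 hi)]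
  · rcases mk_mem_excedancePairs_or hσ hi with hp | hp <;>
      simp only [h, mem_excedancePairs] at hp
    · exact hp.2.symm
    · simpa only [hτ (σ i)] using congrArg τ hp.2

lemma excedancePairs_swap_mul {a b : α} (hab : a < b) (ha : σ a = a) (hb : σ b = b) :
    (swap a b * σ).excedancePairs = insert (a, b) σ.excedancePairs := by
  ext ⟨x, y⟩
  have hinj : ∀ u v, σ u = σ v → u = v := fun _ _ h => σ.injective h
  simp only [mem_excedancePairs, mul_apply, swap_apply_def, mem_insert, Prod.mk.injEq]
  grind

lemma exists_involutive_excedancePairs_eq (M : Finset (α × α)) (hlt : ∀ p ∈ M, p.1 < p.2)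
    (hM : PairwiseVertexDisjoint M) : ∃ σ : Perm α, Involutive σ ∧ σ.excedancePairs = M := by
  induction M using Finset.induction_on with
  | empty =>
    refine ⟨1, fun _ => rfl, eq_empty_of_forall_notMem fun p hp => ?_⟩
    rw [mem_excedancePairs] at hp
    exact hp.1.ne hp.2
  | @insert p M hpM ih =>
    obtain ⟨σ, hσ, rfl⟩ := ih (fun q hq => hlt q (mem_insert_of_mem hq))
      (fun q hq r hr => hM q (mem_insert_of_mem hq) r (mem_insert_of_mem hr))
    have hfix : ∀ v, v = p.1 ∨ v = p.2 → σ v = v := by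
      intro v hv
      by_contra hv'
      rw [← Ne, ← mem_support, ← biUnion_excedancePairs hσ, mem_biUnion] at hv'
      obtain ⟨q, hq, hvq⟩ := hv'
      have := hM p (mem_insert_self p _) q (mem_insert_of_mem hq)
        (ne_of_mem_of_not_mem hq hpM).symm
      simp only [mem_insert, mem_singleton] at hvq
      grind
    refine ⟨swap p.1 p.2 * σ, involutive_swap_mul hσ (hfix _ (.inl rfl)) (hfix _ (.inr rfl)), ?_⟩
    exact excedancePairs_swap_mul (hlt p (mem_insert_self p _)) (hfix _ (.inl rfl))
      (hfix _ (.inr rfl))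

end Equiv.Perm

namespace Fin

variable {n : ℕ} [NeZero n]

lemma add_one_mod_eq_iff (i j : Fin n) : ((i : ℕ) + 1) % n = j ↔ i + 1 = j := by
  rw [Fin.ext_iff, Fin.val_add, Fin.val_one', Nat.add_mod_mod]

lemma add_one_ne_self (hn : 2 ≤ n) (i : Fin n) : i + 1 ≠ i := by
  simp [add_eq_left, Fin.ext_iff, Nat.mod_eq_of_lt (show 1 < n by omega)]

lemma add_one_add_one_ne_self (hn : 3 ≤ n) (i : Fin n) : i + 1 + 1 ≠ i := by
  simp [add_assoc, add_eq_left, Fin.ext_iff, Fin.val_add, Nat.mod_eq_of_lt (show 1 < n by omega),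
    Nat.mod_eq_of_lt (show 2 < n by omega)]

open Fin.NatCast in
lemma forall_of_add_one {P : Fin n → Prop} {i : Fin n} (hi : P i)
    (hP : ∀ j, P j → P (j + 1)) (j : Fin n) : P j := by
  have hk : ∀ k : ℕ, P (i + k) := by
    intro k
    induction k with
    | zero => simpa using hi
    | succ k ih => simpa [add_assoc] using hP _ ih
  simpa using hk (j - i).val

end Fin

namespace Equiv.Perm

variable {n : ℕ} [NeZero n] {σ : Perm (Fin n)}

def MovesAlongCycle (σ : Perm (Fin n)) : Prop :=
  ∀ i, σ i = i ∨ σ i = i + 1 ∨ σ i + 1 = i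

/- Spelled out so that filtering by `MovesAlongCycle` is definitionally the filter produced by
`Matrix.det_eq_sum_filter_of_apply_ne_zero`. -/
instance : DecidablePred (MovesAlongCycle (n := n)) :=
  fun _ => Fintype.decidableForallFintype

lemma MovesAlongCycle.inv (hσ : σ.MovesAlongCycle) : σ⁻¹.MovesAlongCycle := by
  intro j
  rcases hσ (σ⁻¹ j) with h | h | h <;> rw [coe_inv, apply_symm_apply] at h
  · exact .inl h.symm
  · exact .inr (.inr h.symm)
  · exact .inr (.inl h.symm)

lemma MovesAlongCycle.eq_finRotate (hσ : σ.MovesAlongCycle) (hn : 3 ≤ n) {i : Fin n}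
    (h₁ : σ i = i + 1) (h₂ : σ (i + 1) ≠ i) : σ = finRotate n := by
  have step : ∀ j, σ j = j + 1 ∧ σ (j + 1) ≠ j →
      σ (j + 1) = j + 1 + 1 ∧ σ (j + 1 + 1) ≠ j + 1 := by
    rintro j ⟨hj, hj'⟩
    rcases hσ (j + 1) with h | h | h
    · exact absurd (σ.injective (hj.trans h.symm)) (Fin.add_one_ne_self (by omega) j).symm
    · exact ⟨h, fun h' => Fin.add_one_add_one_ne_self hn j (σ.injective (h'.trans hj.symm))⟩
    · exact absurd (add_right_cancel h) hj'
  have hall := Fin.forall_of_add_one (P := fun j => σ j = j + 1 ∧ σ (j + 1) ≠ j) ⟨h₁, h₂⟩ step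
  exact Equiv.ext fun j => (hall j).1.trans (finRotate_apply j).symm

lemma MovesAlongCycle.eq_finRotate_or_eq_inv (hσ : σ.MovesAlongCycle) (hn : 3 ≤ n)
    (hinv : ¬ Involutive σ) : σ = finRotate n ∨ σ = (finRotate n)⁻¹ := by
  obtain ⟨i, hi⟩ := not_forall.1 hinv
  rcases hσ i with h | h | h
  · exact absurd (by rw [h, h]) hi
  · exact .inl (hσ.eq_finRotate hn h (by rwa [h] at hi))
  · refine .inr (inv_eq_iff_eq_inv.1 (hσ.inv.eq_finRotate hn (i := σ i) ?_ ?_))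
    · rw [coe_inv, symm_apply_apply, h]
    · rw [h]
      exact fun h' => hi (by rw [← h', coe_inv, apply_symm_apply])

lemma movesAlongCycle_finRotate : (finRotate n).MovesAlongCycle :=
  fun i => .inr (.inl (finRotate_apply i))

lemma not_involutive_finRotate (hn : 3 ≤ n) : ¬ Involutive (finRotate n) := by
  intro h
  have := h 0
  rw [finRotate_apply, finRotate_apply] at this
  exact Fin.add_one_add_one_ne_self hn 0 this

lemma filter_movesAlongCycle_not_involutive (hn : 3 ≤ n) :
    ({σ | σ.MovesAlongCycle ∧ ¬ Involutive σ} : Finset (Perm (Fin n))) =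
      {finRotate n, (finRotate n)⁻¹} := by
  ext σ
  simp only [mem_filter, mem_univ, true_and, mem_insert, mem_singleton]
  constructor
  · exact fun h => h.1.eq_finRotate_or_eq_inv hn h.2
  · rintro (rfl | rfl)
    · exact ⟨movesAlongCycle_finRotate, not_involutive_finRotate hn⟩
    · refine ⟨movesAlongCycle_finRotate.inv, fun h => not_involutive_finRotate hn fun x => ?_⟩
      simpa using (h (finRotate n (finRotate n x))).symm

end Equiv.Perm

lemma mem_cycleEdges {n : ℕ} [NeZero n] {p : Fin n × Fin n} :
    p ∈ cycleEdges n ↔ p.1 < p.2 ∧ (p.1 + 1 = p.2 ∨ p.2 + 1 = p.1) := by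
  simp [cycleEdges, Fin.add_one_mod_eq_iff]

lemma mem_cycleMatchings {n : ℕ} {M : Finset (Fin n × Fin n)} :
    M ∈ cycleMatchings n ↔ M ⊆ cycleEdges n ∧ PairwiseVertexDisjoint M := by
  rw [cycleMatchings, mem_filter, mem_powerset, PairwiseVertexDisjoint]

namespace Equiv.Perm

lemma sign_smul_prod_of_involutive {n : ℕ} {σ : Perm (Fin n)} {R : Type*} [CommRing R]
    (K : Matrix (Fin n) (Fin n) R) (hK : K.IsSymm) (hσ : Involutive σ) :
    sign σ • ∏ i, K (σ i) i = (-1 : R) ^ #σ.excedancePairs *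
      (∏ p ∈ σ.excedancePairs, K p.1 p.2 ^ 2) *
        ∏ i ∈ univ \ coveredVerts σ.excedancePairs, K i i := by
  rw [sign_eq_neg_one_pow_card_excedancePairs hσ, prod_apply_eq_prod_excedancePairs_mul hσ K,
    coveredVerts, biUnion_excedancePairs hσ, Units.smul_def, zsmul_eq_mul]
  simp only [hK.apply _ _, ← sq]
  push_cast
  ring

variable {n : ℕ} [NeZero n] {σ : Perm (Fin n)}

lemma excedancePairs_subset_cycleEdges_iff (hσ : Involutive σ) :
    σ.excedancePairs ⊆ cycleEdges n ↔ σ.MovesAlongCycle := by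
  constructor
  · intro h i
    by_cases hi : σ i = i
    · exact .inl hi
    · rcases mk_mem_excedancePairs_or hσ hi with hp | hp <;>
        have := (mem_cycleEdges.1 (h hp)).2 <;> grind
  · intro h p hp
    rw [mem_excedancePairs] at hp
    refine mem_cycleEdges.2 ⟨hp.1, ?_⟩
    rcases h p.1 with e | e | e <;> rw [hp.2] at e
    · exact absurd e hp.1.ne'
    · exact .inl e.symm
    · exact .inr e

variable {R : Type*} [CommRing R]

lemma sum_movesAlongCycle_involutive (K : Matrix (Fin n) (Fin n) R) (hK : K.IsSymm) :
    ∑ σ ∈ ({σ | σ.MovesAlongCycle ∧ Involutive σ} : Finset (Perm (Fin n))),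
        sign σ • ∏ i, K (σ i) i =
      ∑ M ∈ cycleMatchings n, (-1 : R) ^ #M * (∏ p ∈ M, K p.1 p.2 ^ 2) *
        ∏ i ∈ univ \ coveredVerts M, K i i := by
  refine sum_nbij excedancePairs (fun σ hσ => ?_) ?_ (fun M hM => ?_)
    (fun σ hσ => sign_smul_prod_of_involutive K hK (mem_filter.1 hσ).2.2)
  · obtain ⟨-, hmoves, hinv⟩ := mem_filter.1 hσ
    exact mem_cycleMatchings.2 ⟨(excedancePairs_subset_cycleEdges_iff hinv).2 hmoves,
      pairwiseVertexDisjoint_excedancePairs hinv⟩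
  · exact excedancePairs_injOn.mono fun σ hσ => (mem_filter.1 hσ).2.2
  · obtain ⟨hsub, hdisj⟩ := mem_cycleMatchings.1 hM
    obtain ⟨σ, hinv, rfl⟩ := exists_involutive_excedancePairs_eq M
      (fun p hp => (mem_cycleEdges.1 (hsub hp)).1) hdisj
    exact ⟨σ, mem_filter.2 ⟨mem_univ σ, (excedancePairs_subset_cycleEdges_iff hinv).1 hsub, hinv⟩,
      rfl⟩

lemma prod_finRotate_eq_prod_cycleEdges (hn : 3 ≤ n) (K : Matrix (Fin n) (Fin n) R)
    (hK : K.IsSymm) : ∏ i, K (finRotate n i) i = ∏ p ∈ cycleEdges n, K p.1 p.2 := by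
  have h1 := Fin.add_one_ne_self (n := n) (by omega)
  have h2 := Fin.add_one_add_one_ne_self hn
  refine prod_nbij' (fun i => (min i (i + 1), max i (i + 1)))
    (fun p => if p.1 + 1 = p.2 then p.1 else p.2) (fun i _ => ?_) (fun _ _ => mem_univ _)
    (fun i _ => ?_) (fun p hp => ?_) (fun i _ => ?_)
  · rw [mem_cycleEdges]
    grind
  · grind
  · rw [mem_cycleEdges] at hp
    grind
  · rw [finRotate_apply]
    rcases le_total i (i + 1) with h | h
    · rw [min_eq_left h, max_eq_right h, hK.apply]
    · rw [min_eq_right h, max_eq_left h]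

lemma sum_finRotate_finRotate_inv (hn : 3 ≤ n) (K : Matrix (Fin n) (Fin n) R) (hK : K.IsSymm) :
    ∑ σ ∈ {finRotate n, (finRotate n)⁻¹}, sign σ • ∏ i, K (σ i) i =
      2 * (-1 : R) ^ (n + 1) * ∏ p ∈ cycleEdges n, K p.1 p.2 := by
  have hne : finRotate n ≠ (finRotate n)⁻¹ := fun h => not_involutive_finRotate hn fun x => by
    simpa using congrArg (fun τ : Perm (Fin n) => τ x) (mul_eq_one_iff_eq_inv.2 h)
  have hprod_inv : ∏ i, K ((finRotate n)⁻¹ i) i = ∏ i, K (finRotate n i) i := by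
    rw [← Equiv.prod_comp (finRotate n)]
    exact prod_congr rfl fun i _ => by rw [coe_inv, symm_apply_apply, hK.apply]
  obtain ⟨m, rfl⟩ : ∃ m, n = m + 1 := ⟨n - 1, by omega⟩
  rw [sum_pair hne, sign_inv, hprod_inv, prod_finRotate_eq_prod_cycleEdges hn K hK,
    sign_finRotate, Units.smul_def, zsmul_eq_mul]
  push_cast
  ring

end Equiv.Perm

/-- Determinant of a symmetric matrix supported on a cycle graph, decomposed into its
matching contributions plus the two full-cycle permutations. -/
theorem stmt_9 (ℓ : ℕ) (hℓ : 3 ≤ ℓ) (K : Matrix (Fin ℓ) (Fin ℓ) ℝ) (hK : K.IsSymm)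
    (hsupp : ∀ i j : Fin ℓ, i ≠ j → (K i j ≠ 0 ↔
      (((i : ℕ) + 1) % ℓ = (j : ℕ) ∨ ((j : ℕ) + 1) % ℓ = (i : ℕ)))) :
    K.det = (∑ M ∈ cycleMatchings ℓ, (-1 : ℝ) ^ M.card *
        (∏ p ∈ M, (K p.1 p.2) ^ 2) * ∏ i ∈ univ \ coveredVerts M, K i i) +
      2 * (-1 : ℝ) ^ (ℓ + 1) * ∏ p ∈ cycleEdges ℓ, K p.1 p.2 := by
  have : NeZero ℓ := ⟨by omega⟩
  have hadj : ∀ i j : Fin ℓ, K i j ≠ 0 → i = j ∨ i = j + 1 ∨ i + 1 = j := by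
    intro i j hij
    by_cases h : i = j
    · exact .inl h
    · rw [hsupp i j h, Fin.add_one_mod_eq_iff, Fin.add_one_mod_eq_iff] at hij
      exact .inr (hij.symm.imp Eq.symm id)
  have hdet : K.det = ∑ σ ∈ ({σ | σ.MovesAlongCycle} : Finset (Perm (Fin ℓ))),
      Perm.sign σ • ∏ i, K (σ i) i :=
    K.det_eq_sum_filter_of_apply_ne_zero hadj
  rw [hdet, ← sum_filter_add_sum_filter_not _ fun σ : Perm (Fin ℓ) => Involutive σ,
    filter_filter, filter_filter, Perm.sum_movesAlongCycle_involutive K hK,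
    Perm.filter_movesAlongCycle_not_involutive hℓ, Perm.sum_finRotate_finRotate_inv hℓ K hK]
end
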